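/- Let P ⊆ ℝⁿ be a fixed finite set of distinct generators, A ⊆ ℝⁿ a bounded measurable set containing P such that every intersection C(p) ∩ A has positive Lebesgue measure, and K : ℝⁿ → ℝ≥0 continuous with K(0) > 0. For h > 0, let f_h be the CVDE built on P with the restricted kernel K_h(p,x) = K((p − x)/h) · χ_A(x). Then, as h → +∞, the probability measures f_h dx converge in distribution (weakly) to the probability measure f̃ dvol of the Voronoi Density Estimator, where vol is Lebesgue measure restricted to A and f̃(x) = 1/(|P| · vol(C(x))). -/

import Mathlib

open MeasureTheory Metric Set Filter

noncomputable section

/-- The Voronoi cell of a generator `p` w.r.t. the finite set of generators `P`. -/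
def cell {n : ℕ} (P : Finset (EuclideanSpace ℝ (Fin n))) (p : EuclideanSpace ℝ (Fin n)) :
    Set (EuclideanSpace ℝ (Fin n)) :=
  {x | ∀ q ∈ P, dist x p ≤ dist x q}

/-- A choice of a nearest generator (the generator of the cell containing `x`;
uniquely determined off the cell boundaries). -/
noncomputable def nearest {n : ℕ} (P : Finset (EuclideanSpace ℝ (Fin n)))
    (x : EuclideanSpace ℝ (Fin n)) : EuclideanSpace ℝ (Fin n) :=
  if h : P.Nonempty then (P.exists_min_image (fun p => dist x p) h).choose else 0

/-- The Compactified Voronoi Density Estimator: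
`f(x) = K(p,x) / (|P| · vol_p(C(x)))` where `p` is the generator of `C(x)`. -/
noncomputable def cvde {n : ℕ} (P : Finset (EuclideanSpace ℝ (Fin n)))
    (K : EuclideanSpace ℝ (Fin n) → EuclideanSpace ℝ (Fin n) → ℝ)
    (x : EuclideanSpace ℝ (Fin n)) : ℝ :=
  K (nearest P x) x / (P.card * ∫ y in cell P (nearest P x), K (nearest P x) y)

/-- The Voronoi Density Estimator w.r.t. Lebesgue measure restricted to a bounded region
`A`: `f̃(x) = 1/(|P| · vol(C(x) ∩ A))`. -/
noncomputable def vde {n : ℕ} (P : Finset (EuclideanSpace ℝ (Fin n)))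
    (A : Set (EuclideanSpace ℝ (Fin n))) (x : EuclideanSpace ℝ (Fin n)) : ℝ :=
  1 / (P.card * (volume (cell P (nearest P x) ∩ A)).toReal)

/-!
Off the perpendicular bisectors of pairs of generators, a Lebesgue-null set, the nearest
generator is unique, so both densities agree a.e. with finite sums of measurable pieces.
For `p ∈ P` and `x` in the bounded set `A`, `h⁻¹ • (p - x) → 0` uniformly, so the kernels
`K_h(p, ·)` converge boundedly to `K 0 · χ_A`. Hence the normalisers `∫_{C(p)} K_h(p, y) dy`
tend to `K 0 · vol (C(p) ∩ A) > 0`, the CVDE density converges pointwise to `χ_A · f̃` and is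
eventually bounded by a multiple of `χ_A`, and dominated convergence gives
`∫ φ f_h → ∫ φ χ_A f̃` for every bounded continuous `φ`.
-/

open Topology

section WeakConvergence

variable {α ι : Type*} [MeasurableSpace α] {μ : Measure α}

lemma integral_withDensity_ofReal {u : α → ℝ} (hu : AEMeasurable u μ) (φ : α → ℝ) :
    ∫ x, φ x ∂μ.withDensity (fun x => ENNReal.ofReal (u x)) = ∫ x, max (u x) 0 * φ x ∂μ := by
  rw [integral_withDensity_eq_integral_toReal_smul₀ hu.ennreal_ofReal
    (ae_of_all _ fun _ => ENNReal.ofReal_lt_top)]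
  simp_rw [ENNReal.toReal_ofReal', smul_eq_mul]

theorem tendsto_integral_withDensity_ofReal [TopologicalSpace α] [OpensMeasurableSpace α]
    {l : Filter ι} [l.IsCountablyGenerated]
    {f : ι → α → ℝ} {g bound : α → ℝ} (hf : ∀ᶠ i in l, AEMeasurable (f i) μ)
    (hg : AEMeasurable g μ) (hf_le : ∀ᶠ i in l, ∀ᵐ x ∂μ, |f i x| ≤ bound x)
    (hbound : Integrable bound μ) (hlim : ∀ᵐ x ∂μ, Tendsto (fun i => f i x) l (𝓝 (g x)))
    (φ : BoundedContinuousFunction α ℝ) :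
    Tendsto (fun i => ∫ x, φ x ∂μ.withDensity (fun x => ENNReal.ofReal (f i x))) l
      (𝓝 (∫ x, φ x ∂μ.withDensity (fun x => ENNReal.ofReal (g x)))) := by
  rw [integral_withDensity_ofReal hg]
  refine (tendsto_integral_filter_of_dominated_convergence (F := fun i x => max (f i x) 0 * φ x)
    (fun x => bound x * ‖φ‖) ?_ ?_ (hbound.mul_const _) ?_).congr' ?_
  · filter_upwards [hf] with i hi
    exact ((hi.max aemeasurable_const).mul
      φ.continuous.measurable.aemeasurable).aestronglyMeasurable
  · filter_upwards [hf_le] with i hi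
    filter_upwards [hi] with x hx
    have hmax : ‖max (f i x) 0‖ ≤ bound x := by
      rw [Real.norm_of_nonneg (le_max_right _ _)]
      exact max_le ((le_abs_self _).trans hx) ((abs_nonneg _).trans hx)
    rw [norm_mul]
    exact mul_le_mul hmax (φ.norm_coe_le_norm x) (norm_nonneg _) ((norm_nonneg _).trans hmax)
  · filter_upwards [hlim] with x hx
    exact (hx.max tendsto_const_nhds).mul_const _
  · filter_upwards [hf] with i hi
    exact (integral_withDensity_ofReal hi _).symm

end WeakConvergence

section Rescaling

variable {E : Type*} [NormedAddCommGroup E] [NormedSpace ℝ E] {K : E → ℝ}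

lemma norm_inv_smul_le_norm {h : ℝ} (hh : 1 ≤ h) (v : E) : ‖h⁻¹ • v‖ ≤ ‖v‖ := by
  rw [norm_smul, Real.norm_of_nonneg (by positivity)]
  exact mul_le_of_le_one_left (norm_nonneg _) (inv_le_one_of_one_le₀ hh)

lemma tendsto_comp_inv_smul_atTop (hK : Continuous K) (v : E) :
    Tendsto (fun h : ℝ => K (h⁻¹ • v)) atTop (𝓝 (K 0)) :=
  (hK.tendsto 0).comp (zero_smul ℝ v ▸ tendsto_inv_atTop_zero.smul_const v)

lemma exists_forall_abs_comp_inv_smul_sub_le [ProperSpace E] (hK : Continuous K) {S T : Set E}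
    (hS : Bornology.IsBounded S) (hT : Bornology.IsBounded T) :
    ∃ M, ∀ h : ℝ, 1 ≤ h → ∀ p ∈ S, ∀ y ∈ T, |K (h⁻¹ • (p - y))| ≤ M := by
  obtain ⟨R, hR⟩ := (isBounded_sub hS hT).subset_closedBall 0
  obtain ⟨M, hM⟩ := (isCompact_closedBall (0 : E) R).exists_bound_of_continuousOn hK.continuousOn
  refine ⟨M, fun h hh p hp y hy => hM _ (mem_closedBall_zero_iff.2 ?_)⟩
  exact (norm_inv_smul_le_norm hh _).trans
    (mem_closedBall_zero_iff.1 (hR (Set.sub_mem_sub hp hy)))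

lemma tendsto_setIntegral_comp_inv_smul_sub_atTop [ProperSpace E] [MeasurableSpace E]
    [BorelSpace E] {μ : Measure E} [IsFiniteMeasureOnCompacts μ] (hK : Continuous K)
    {S : Set E} (hS : MeasurableSet S) (hSb : Bornology.IsBounded S) (p : E) :
    Tendsto (fun h : ℝ => ∫ y in S, K (h⁻¹ • (p - y)) ∂μ) atTop (𝓝 (μ.real S * K 0)) := by
  obtain ⟨M, hM⟩ := exists_forall_abs_comp_inv_smul_sub_le hK Bornology.isBounded_singleton hSb
  rw [← smul_eq_mul, ← setIntegral_const]
  refine tendsto_integral_filter_of_dominated_convergence (fun _ => M) ?_ ?_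
    (integrableOn_const hSb.measure_lt_top.ne)
    (.of_forall fun y => tendsto_comp_inv_smul_atTop hK _)
  · exact .of_forall fun h =>
      (hK.comp ((continuous_const.sub continuous_id).const_smul h⁻¹)).aestronglyMeasurable
  · filter_upwards [eventually_ge_atTop 1] with h hh
    filter_upwards [ae_restrict_mem hS] with y hy
    exact hM h hh p rfl y hy

end Rescaling

section Voronoi

variable {n : ℕ} {P : Finset (EuclideanSpace ℝ (Fin n))}

lemma nearest_mem (hP : P.Nonempty) (x : EuclideanSpace ℝ (Fin n)) : nearest P x ∈ P := by
  rw [nearest, dif_pos hP]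
  exact (P.exists_min_image (fun p => dist x p) hP).choose_spec.1

lemma mem_cell_nearest (hP : P.Nonempty) (x : EuclideanSpace ℝ (Fin n)) :
    x ∈ cell P (nearest P x) := by
  rw [nearest, dif_pos hP]
  exact (P.exists_min_image (fun p => dist x p) hP).choose_spec.2

lemma isClosed_cell (P : Finset (EuclideanSpace ℝ (Fin n))) (p : EuclideanSpace ℝ (Fin n)) :
    IsClosed (cell P p) := by
  simp only [cell, ofPred_forall]
  exact isClosed_biInter fun q _ =>
    isClosed_le (continuous_id.dist continuous_const) (continuous_id.dist continuous_const)

/-- Ties between generators only occur on perpendicular bisectors, which are Lebesgue-null. -/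
lemma ae_nearest_eq_of_mem_cell (hP : P.Nonempty) :
    ∀ᵐ x, ∀ p ∈ P, x ∈ cell P p → nearest P x = p := by
  have hnull : volume (⋃ p ∈ P, ⋃ q ∈ P, ⋃ (_ : p ≠ q),
      (AffineSubspace.perpBisector p q : Set (EuclideanSpace ℝ (Fin n)))) = 0 :=
    (measure_biUnion_null_iff P.countable_toSet).2 fun p _ =>
      (measure_biUnion_null_iff P.countable_toSet).2 fun q _ => measure_iUnion_null fun hpq =>
        Measure.addHaar_affineSubspace _ _ (by simpa using hpq)
  rw [ae_iff]
  refine measure_mono_null (fun x hx => ?_) hnull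
  push Not at hx
  obtain ⟨p, hp, hxp, hne⟩ := hx
  simp only [mem_iUnion, SetLike.mem_coe, AffineSubspace.mem_perpBisector_iff_dist_eq]
  exact ⟨nearest P x, nearest_mem hP x, p, hp, hne,
    le_antisymm (mem_cell_nearest hP x p hp) (hxp _ (nearest_mem hP x))⟩

lemma aemeasurable_nearest_apply (hP : P.Nonempty)
    {F : EuclideanSpace ℝ (Fin n) → EuclideanSpace ℝ (Fin n) → ℝ}
    (hF : ∀ p ∈ P, Measurable (F p)) : AEMeasurable (fun x => F (nearest P x) x) := by
  refine (Finset.measurable_sum P fun p hp =>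
    (hF p hp).indicator (isClosed_cell P p).measurableSet).aemeasurable.congr ?_
  filter_upwards [ae_nearest_eq_of_mem_cell hP] with x hx
  rw [Finset.sum_eq_single_of_mem _ (nearest_mem hP x)]
  · exact indicator_of_mem (mem_cell_nearest hP x) _
  · exact fun q hq hne => indicator_of_notMem (fun hxq => hne (hx q hq hxq).symm) _

lemma aemeasurable_cvde (hP : P.Nonempty)
    {k : EuclideanSpace ℝ (Fin n) → EuclideanSpace ℝ (Fin n) → ℝ}
    (hk : ∀ p ∈ P, Measurable (k p)) : AEMeasurable (cvde P k) :=
  aemeasurable_nearest_apply (F := fun p x => k p x / (P.card * ∫ y in cell P p, k p y)) hP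
    fun p hp => (hk p hp).div_const _

lemma aemeasurable_vde (hP : P.Nonempty) (A : Set (EuclideanSpace ℝ (Fin n))) :
    AEMeasurable (vde P A) :=
  aemeasurable_nearest_apply (F := fun p _ => 1 / (P.card * (volume (cell P p ∩ A)).toReal))
    hP fun _ _ => measurable_const

end Voronoi

section RestrictedKernel

variable {n : ℕ} {P : Finset (EuclideanSpace ℝ (Fin n))} {A : Set (EuclideanSpace ℝ (Fin n))}
  {K : EuclideanSpace ℝ (Fin n) → ℝ}

def restrictedKernel (K : EuclideanSpace ℝ (Fin n) → ℝ) (A : Set (EuclideanSpace ℝ (Fin n)))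
    (h : ℝ) (p x : EuclideanSpace ℝ (Fin n)) : ℝ :=
  K (h⁻¹ • (p - x)) * A.indicator (fun _ => 1) x

lemma measurable_restrictedKernel (hA : MeasurableSet A) (hK : Continuous K) (h : ℝ)
    (p : EuclideanSpace ℝ (Fin n)) : Measurable (restrictedKernel K A h p) :=
  (hK.comp ((continuous_const.sub continuous_id).const_smul h⁻¹)).measurable.mul
    (measurable_const.indicator hA)

lemma tendsto_integral_cell_restrictedKernel (hA : MeasurableSet A)
    (hAbdd : Bornology.IsBounded A) (hK : Continuous K) (p : EuclideanSpace ℝ (Fin n)) :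
    Tendsto (fun h => ∫ y in cell P p, restrictedKernel K A h p y) atTop
      (𝓝 (volume.real (cell P p ∩ A) * K 0)) := by
  have hind : ∀ h y, restrictedKernel K A h p y = A.indicator (fun y => K (h⁻¹ • (p - y))) y := by
    intro h y
    by_cases hy : y ∈ A <;> simp [restrictedKernel, hy]
  simp only [hind, setIntegral_indicator hA]
  exact tendsto_setIntegral_comp_inv_smul_sub_atTop hK
    ((isClosed_cell P p).measurableSet.inter hA) (hAbdd.subset inter_subset_right) p

lemma volume_real_cell_inter_pos (hAbdd : Bornology.IsBounded A) {p : EuclideanSpace ℝ (Fin n)}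
    (hp : 0 < volume (cell P p ∩ A)) : 0 < volume.real (cell P p ∩ A) :=
  ENNReal.toReal_pos hp.ne' (hAbdd.subset inter_subset_right).measure_lt_top.ne

lemma exists_eventually_le_integral_cell_restrictedKernel (hP : P.Nonempty)
    (hA : MeasurableSet A) (hAbdd : Bornology.IsBounded A)
    (hpos : ∀ p ∈ P, 0 < volume (cell P p ∩ A)) (hK : Continuous K) (hK00 : 0 < K 0) :
    ∃ ε > 0, ∀ᶠ h in atTop, ∀ p ∈ P, ε ≤ ∫ y in cell P p, restrictedKernel K A h p y := by
  have hc : ∀ p ∈ P, 0 < volume.real (cell P p ∩ A) * K 0 := fun p hp =>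
    mul_pos (volume_real_cell_inter_pos hAbdd (hpos p hp)) hK00
  obtain ⟨p₀, hp₀, hmin⟩ := P.exists_min_image (fun p => volume.real (cell P p ∩ A) * K 0) hP
  refine ⟨_, half_pos (hc p₀ hp₀), (eventually_all_finset P).2 fun p hp => ?_⟩
  exact (tendsto_integral_cell_restrictedKernel hA hAbdd hK p).eventually
    (eventually_ge_nhds ((half_lt_self (hc p₀ hp₀)).trans_le (hmin p hp)))

lemma exists_eventually_abs_cvde_restrictedKernel_le (hP : P.Nonempty)
    (hA : MeasurableSet A) (hAbdd : Bornology.IsBounded A)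
    (hpos : ∀ p ∈ P, 0 < volume (cell P p ∩ A)) (hK : Continuous K) (hK00 : 0 < K 0) :
    ∃ C, ∀ᶠ h in atTop, ∀ x, |cvde P (restrictedKernel K A h) x| ≤ A.indicator (fun _ => C) x := by
  obtain ⟨M, hM⟩ := exists_forall_abs_comp_inv_smul_sub_le hK P.finite_toSet.isBounded hAbdd
  obtain ⟨ε, hε, hD⟩ := exists_eventually_le_integral_cell_restrictedKernel hP hA hAbdd hpos hK hK00
  refine ⟨M / ε, ?_⟩
  filter_upwards [hD, eventually_ge_atTop 1] with h hD hh x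
  have hp := nearest_mem hP x
  have hden : ε ≤ P.card * ∫ y in cell P (nearest P x), restrictedKernel K A h (nearest P x) y :=
    (hD _ hp).trans (le_mul_of_one_le_left (hε.le.trans (hD _ hp))
      (by exact_mod_cast hP.card_pos))
  by_cases hx : x ∈ A
  · have hKx := hM h hh _ hp x hx
    rw [cvde, abs_div, abs_of_pos (hε.trans_le hden), indicator_of_mem hx, restrictedKernel,
      indicator_of_mem hx, mul_one]
    exact div_le_div₀ ((abs_nonneg _).trans hKx) hKx hε hden
  · simp [cvde, restrictedKernel, hx]

lemma tendsto_cvde_restrictedKernel (hP : P.Nonempty) (hA : MeasurableSet A)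
    (hAbdd : Bornology.IsBounded A) (hpos : ∀ p ∈ P, 0 < volume (cell P p ∩ A))
    (hK : Continuous K) (hK00 : 0 < K 0) (x : EuclideanSpace ℝ (Fin n)) :
    Tendsto (fun h => cvde P (restrictedKernel K A h) x) atTop (𝓝 (A.indicator (vde P A) x)) := by
  have hp := nearest_mem hP x
  have hvol := volume_real_cell_inter_pos hAbdd (hpos _ hp)
  have hlim := ((tendsto_comp_inv_smul_atTop hK (nearest P x - x)).mul_const
    (A.indicator (fun _ => (1 : ℝ)) x)).div
    ((tendsto_integral_cell_restrictedKernel hA hAbdd hK (nearest P x)).const_mul (P.card : ℝ))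
    (by have := hP.card_pos; positivity)
  have hval : A.indicator (vde P A) x = K 0 * A.indicator (fun _ => (1 : ℝ)) x /
      (P.card * (volume.real (cell P (nearest P x) ∩ A) * K 0)) := by
    by_cases hx : x ∈ A
    · simp only [indicator_of_mem hx, vde, Measure.real]
      field_simp
    · simp [hx]
  rw [hval]
  exact hlim

end RestrictedKernel

theorem cvde_tendsto_vde_of_bandwidth_infty_general {n : ℕ}
    (P : Finset (EuclideanSpace ℝ (Fin n))) (hP : P.Nonempty)
    (A : Set (EuclideanSpace ℝ (Fin n))) (hA : MeasurableSet A)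
    (hAbdd : Bornology.IsBounded A)
    (hpos : ∀ p ∈ P, 0 < volume (cell P p ∩ A))
    (K : EuclideanSpace ℝ (Fin n) → ℝ) (hKcont : Continuous K)
    (hK00 : 0 < K 0) :
    ∀ φ : BoundedContinuousFunction (EuclideanSpace ℝ (Fin n)) ℝ,
      Tendsto (fun h : ℝ =>
          ∫ x, φ x ∂(volume.withDensity fun x =>
            ENNReal.ofReal (cvde P
              (fun p y => K (h⁻¹ • (p - y)) * A.indicator (fun _ => (1 : ℝ)) y) x)))
        atTop
        (nhds (∫ x, φ x ∂((volume.restrict A).withDensity fun x =>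
          ENNReal.ofReal (vde P A x)))) := by
  intro φ
  have hvde : (volume.restrict A).withDensity (fun x => ENNReal.ofReal (vde P A x)) =
      volume.withDensity fun x => ENNReal.ofReal (A.indicator (vde P A) x) := by
    rw [← withDensity_indicator hA]
    congr with x
    by_cases hx : x ∈ A <;> simp [hx]
  obtain ⟨C, hC⟩ := exists_eventually_abs_cvde_restrictedKernel_le hP hA hAbdd hpos hKcont hK00
  rw [hvde]
  exact tendsto_integral_withDensity_ofReal
    (.of_forall fun h => aemeasurable_cvde hP fun p _ => measurable_restrictedKernel hA hKcont h p)
    ((aemeasurable_vde hP A).indicator hA) (hC.mono fun _ hh => ae_of_all _ hh)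
    ((integrable_indicator_iff hA).2 (integrableOn_const hAbdd.measure_lt_top.ne))
    (ae_of_all _ (tendsto_cvde_restrictedKernel hP hA hAbdd hpos hKcont hK00)) φ

/-- as `h → +∞`, the CVDE measures `f_h dx` built with the restricted kernel
`K_h(p,x) = K((p−x)/h)·χ_A(x)` converge weakly (tested against bounded continuous
functions) to the VDE measure `f̃ dvol`, where `vol` is Lebesgue measure restricted to the
bounded region `A ⊇ P`. -/
theorem cvde_tendsto_vde_of_bandwidth_infty {n : ℕ}
    (P : Finset (EuclideanSpace ℝ (Fin n))) (hP : P.Nonempty)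
    (A : Set (EuclideanSpace ℝ (Fin n))) (hA : MeasurableSet A)
    (hAbdd : Bornology.IsBounded A)
    (hPA : (P : Set (EuclideanSpace ℝ (Fin n))) ⊆ A)
    (hpos : ∀ p ∈ P, 0 < volume (cell P p ∩ A))
    (K : EuclideanSpace ℝ (Fin n) → ℝ) (hKcont : Continuous K) (hK0 : ∀ x, 0 ≤ K x)
    (hK00 : 0 < K 0) :
    ∀ φ : BoundedContinuousFunction (EuclideanSpace ℝ (Fin n)) ℝ,
      Tendsto (fun h : ℝ =>
          ∫ x, φ x ∂(volume.withDensity fun x =>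
            ENNReal.ofReal (cvde P
              (fun p y => K (h⁻¹ • (p - y)) * A.indicator (fun _ => (1 : ℝ)) y) x)))
        atTop
        (nhds (∫ x, φ x ∂((volume.restrict A).withDensity fun x =>
          ENNReal.ofReal (vde P A x)))) :=
  cvde_tendsto_vde_of_bandwidth_infty_general P hP A hA hAbdd hpos K hKcont hK00
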